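/- Let b₁, b₂ ∈ C[0,1] with b₂(r) ≥ b₁(r) > 0 for all r ∈ (0,1), and assume b₂(r) > b₁(r) on a subset of (0,1) of positive Lebesgue measure. For i = 1,2 let u_i ∈ C¹[0,1] be such that r ↦ (−u_i'(r))^N is continuously differentiable on (0,1), ((−u_i')^N)'(r) = b_i(r) (u_i(r))^N for all r ∈ (0,1), and u_i'(0) = u_i(1) = 0. If u₁(r) ≠ 0 for all r ∈ (0,1), then u₂ has at least one zero in (0,1). -/

import Mathlib

/-!
Picone's identity for the operator `((-u')^N)'`: for `u₂ > 0` the function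
`P = u₁^(N+1) (-u₂')^N / u₂^N - u₁ (-u₁')^N` has derivative `(b₂ - b₁) u₁^(N+1)` plus
`(-u₁')^(N+1) + N y^(N+1) - (N+1) (-u₁') y^N` with `y = -u₁ u₂' / u₂`, and the latter is
nonnegative by AM-GM. If `u₂` had no zero then, after changing signs, both solutions are positive
and decreasing, so `P` is nondecreasing on `[0,1)` with `P 0 = 0` by the Neumann condition, while
`P → 0` at `1` because `u₁ / u₂ → u₁'(1) / u₂'(1)` and `u₂'(1) < 0`. Hence `P = 0` on `[0,1)`,
contradicting `P' > 0` at a point where `b₁ < b₂`.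
-/

open Set Filter Topology MeasureTheory

theorem add_one_mul_mul_pow_le (N : ℕ) {x y : ℝ} (hx : 0 ≤ x) (hy : 0 ≤ y) :
    (N + 1) * (x * y ^ N) ≤ x ^ (N + 1) + N * y ^ (N + 1) := by
  induction N with
  | zero => simp
  | succ M ih =>
    have hmono : 0 ≤ (x - y) * (x ^ (M + 1) - y ^ (M + 1)) := by
      rcases le_total x y with h | h
      · have := pow_le_pow_left₀ hx h (M + 1); nlinarith
      · have := pow_le_pow_left₀ hy h (M + 1); nlinarith
    push_cast
    linear_combination mul_le_mul_of_nonneg_left ih hy + hmono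

theorem IsPreconnected.pos_or_neg_of_ne_zero {X : Type*} [TopologicalSpace X] {s : Set X}
    (hs : IsPreconnected s) {f : X → ℝ} (hf : ContinuousOn f s) (hne : ∀ x ∈ s, f x ≠ 0) :
    (∀ x ∈ s, 0 < f x) ∨ (∀ x ∈ s, f x < 0) := by
  by_contra! ⟨⟨a, ha, hfa⟩, ⟨b, hb, hfb⟩⟩
  obtain ⟨x, hx, hfx⟩ := hs.intermediate_value ha hb hf ⟨hfa, hfb⟩
  exact hne x hx hfx

theorem HasDerivWithinAt.tendsto_div_of_eq_zero {f g : ℝ → ℝ} {f' g' a : ℝ} {s : Set ℝ}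
    (hf : HasDerivWithinAt f f' s a) (hg : HasDerivWithinAt g g' s a) (hfa : f a = 0)
    (hga : g a = 0) (hg' : g' ≠ 0) (ha : a ∉ s) :
    Tendsto (fun x => f x / g x) (𝓝[s] a) (𝓝 (f' / g')) := by
  refine (((hasDerivWithinAt_iff_tendsto_slope' ha).1 hf).div
    ((hasDerivWithinAt_iff_tendsto_slope' ha).1 hg) hg').congr' ?_
  filter_upwards [self_mem_nhdsWithin] with x hx
  have hxa : x - a ≠ 0 := sub_ne_zero.2 (ne_of_mem_of_not_mem hx ha)
  change slope f a x / slope g a x = f x / g x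
  rw [slope_def_field, slope_def_field, hfa, hga, sub_zero, sub_zero,
    div_div_div_cancel_right₀ hxa]

theorem MonotoneOn.le_of_tendsto_nhdsLT {f g : ℝ → ℝ} {a b l : ℝ} (hf : MonotoneOn f (Ico a b))
    (hfg : ∀ᶠ x in 𝓝[<] b, f x ≤ g x) (hg : Tendsto g (𝓝[<] b) (𝓝 l)) {x : ℝ}
    (hx : x ∈ Ico a b) : f x ≤ l := by
  refine ge_of_tendsto hg ?_
  filter_upwards [hfg, Ioo_mem_nhdsLT hx.2] with t hfgt ht
  exact (hf hx ⟨hx.1.trans ht.1.le, ht.2⟩ ht.1.le).trans hfgt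

noncomputable def picone (N : ℕ) (u₁ u₁' u₂ u₂' : ℝ → ℝ) (t : ℝ) : ℝ :=
  u₁ t ^ (N + 1) * (-u₂' t) ^ N / u₂ t ^ N - u₁ t * (-u₁' t) ^ N

theorem hasDerivAt_picone {N : ℕ} {b₁ b₂ u₁ u₁' u₂ u₂' : ℝ → ℝ} {x : ℝ}
    (hu₁ : HasDerivAt u₁ (u₁' x) x) (hu₂ : HasDerivAt u₂ (u₂' x) x)
    (hv₁ : HasDerivAt (fun t => (-u₁' t) ^ N) (b₁ x * u₁ x ^ N) x)
    (hv₂ : HasDerivAt (fun t => (-u₂' t) ^ N) (b₂ x * u₂ x ^ N) x) (hx : u₂ x ≠ 0) :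
    HasDerivAt (picone N u₁ u₁' u₂ u₂')
      ((b₂ x - b₁ x) * u₁ x ^ (N + 1) + ((-u₁' x) ^ (N + 1) + N * (u₁ x * -u₂' x / u₂ x) ^ (N + 1)
        - (N + 1) * (-u₁' x * (u₁ x * -u₂' x / u₂ x) ^ N))) x := by
  have hP := (((hu₁.pow (N + 1)).mul hv₂).div (hu₂.pow N) (pow_ne_zero N hx)).sub (hu₁.mul hv₁)
  simp only [Pi.pow_apply, Pi.mul_apply] at hP
  refine hP.congr_deriv ?_
  rcases N with _ | n
  · simp only [zero_add, Nat.cast_one, pow_zero, mul_one, one_mul, pow_one, CharP.cast_eq_zero,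
      zero_mul, mul_zero, sub_zero, one_pow, div_one, add_zero]
    ring
  · simp only [div_pow]
    field_simp
    push_cast
    ring

theorem picone_le {N : ℕ} {u₁ u₁' u₂ u₂' : ℝ → ℝ} {r : ℝ} (hu₁ : 0 ≤ u₁ r) (hu₁' : u₁' r ≤ 0) :
    picone N u₁ u₁' u₂ u₂' r ≤ u₁ r * (u₁ r / u₂ r) ^ N * (-u₂' r) ^ N := by
  have : 0 ≤ u₁ r * (-u₁' r) ^ N := mul_nonneg hu₁ (pow_nonneg (neg_nonneg.2 hu₁') N)
  rw [picone, show u₁ r ^ (N + 1) * (-u₂' r) ^ N / u₂ r ^ N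
    = u₁ r * (u₁ r / u₂ r) ^ N * (-u₂' r) ^ N by ring]
  linarith

structure IsBVPSolution (N : ℕ) (b u u' : ℝ → ℝ) : Prop where
  continuousOn_deriv : ContinuousOn u' (Icc 0 1)
  hasDerivWithinAt : ∀ r ∈ Icc (0 : ℝ) 1, HasDerivWithinAt u (u' r) (Icc 0 1) r
  hasDerivAt_flux : ∀ r ∈ Ioo (0 : ℝ) 1, HasDerivAt (fun t => (-u' t) ^ N) (b r * u r ^ N) r
  deriv_zero : u' 0 = 0
  apply_one : u 1 = 0

namespace IsBVPSolution

variable {N : ℕ} {b u u' b₁ b₂ u₁ u₁' u₂ u₂' : ℝ → ℝ}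

theorem neg (h : IsBVPSolution N b u u') : IsBVPSolution N b (-u) (-u') where
  continuousOn_deriv := h.continuousOn_deriv.neg
  hasDerivWithinAt r hr := (h.hasDerivWithinAt r hr).neg
  hasDerivAt_flux r hr := by
    have hflux := (h.hasDerivAt_flux r hr).const_mul ((-1 : ℝ) ^ N)
    rw [show (fun t => (-1 : ℝ) ^ N * (-u' t) ^ N) = fun t => (-(-u') t) ^ N by
      ext t; rw [← mul_pow, Pi.neg_apply, neg_one_mul]] at hflux
    exact hflux.congr_deriv (by simp only [Pi.neg_apply]; ring)
  deriv_zero := by simp [h.deriv_zero]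
  apply_one := by simp [h.apply_one]

theorem continuousOn (h : IsBVPSolution N b u u') : ContinuousOn u (Icc 0 1) :=
  fun r hr => (h.hasDerivWithinAt r hr).continuousWithinAt

theorem hasDerivAt (h : IsBVPSolution N b u u') {r : ℝ} (hr : r ∈ Ioo (0 : ℝ) 1) :
    HasDerivAt u (u' r) r :=
  (h.hasDerivWithinAt r (Ioo_subset_Icc_self hr)).hasDerivAt (Icc_mem_nhds hr.1 hr.2)

theorem exists_pos_of_ne_zero (h : IsBVPSolution N b u u') (hne : ∀ r ∈ Ioo (0 : ℝ) 1, u r ≠ 0) :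
    ∃ v v', IsBVPSolution N b v v' ∧ ∀ r ∈ Ioo (0 : ℝ) 1, 0 < v r := by
  rcases isPreconnected_Ioo.pos_or_neg_of_ne_zero (h.continuousOn.mono Ioo_subset_Icc_self) hne
    with hpos | hneg
  · exact ⟨u, u', h, hpos⟩
  · exact ⟨-u, -u', h.neg, fun r hr => neg_pos.2 (hneg r hr)⟩

theorem flux_pos (h : IsBVPSolution N b u u') (hN : N ≠ 0) (hb : ∀ r ∈ Ioo (0 : ℝ) 1, 0 < b r)
    (hu : ∀ r ∈ Ioo (0 : ℝ) 1, 0 < u r) {r : ℝ} (hr : r ∈ Ioc (0 : ℝ) 1) : 0 < (-u' r) ^ N := by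
  have hmono : StrictMonoOn (fun t => (-u' t) ^ N) (Icc 0 1) := by
    refine strictMonoOn_of_hasDerivWithinAt_pos (convex_Icc 0 1)
      (h.continuousOn_deriv.neg.pow N) (f' := fun r => b r * u r ^ N) ?_ ?_ <;> rw [interior_Icc]
    · exact fun x hx => (h.hasDerivAt_flux x hx).hasDerivWithinAt
    · exact fun x hx => mul_pos (hb x hx) (pow_pos (hu x hx) N)
  simpa [h.deriv_zero, hN] using
    hmono (left_mem_Icc.2 zero_le_one) (Ioc_subset_Icc_self hr) hr.1

theorem deriv_lt_zero (h : IsBVPSolution N b u u') (hN : N ≠ 0) (hb : ∀ r ∈ Ioo (0 : ℝ) 1, 0 < b r)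
    (hu : ∀ r ∈ Ioo (0 : ℝ) 1, 0 < u r) : ∀ r ∈ Ioc (0 : ℝ) 1, u' r < 0 := by
  -- For even `N`, `(-u')^N > 0` only gives `u' ≠ 0`; the sign comes from `u (1/2) > u 1`.
  have hne : ∀ r ∈ Ioc (0 : ℝ) 1, u' r ≠ 0 := fun r hr h0 => by
    simpa [h0, hN] using h.flux_pos hN hb hu hr
  obtain ⟨c, hc, hslope⟩ := exists_hasDerivAt_eq_slope u u' (by norm_num : (1 / 2 : ℝ) < 1)
    (h.continuousOn.mono (Icc_subset_Icc (by norm_num) le_rfl))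
    (fun x hx => h.hasDerivAt ⟨by linarith [hx.1], hx.2⟩)
  have hc_neg : u' c < 0 := by
    rw [hslope, h.apply_one]
    exact div_neg_of_neg_of_pos (by linarith [hu (1 / 2) (by norm_num)]) (by norm_num)
  refine (isPreconnected_Ioc.pos_or_neg_of_ne_zero (h.continuousOn_deriv.mono Ioc_subset_Icc_self)
    hne).resolve_left fun hpos => ?_
  exact (hpos c ⟨by linarith [hc.1], hc.2.le⟩).not_gt hc_neg

theorem pos_of_deriv_lt_zero (h : IsBVPSolution N b u u') (hd : ∀ r ∈ Ioo (0 : ℝ) 1, u' r < 0)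
    {r : ℝ} (hr : r ∈ Ico (0 : ℝ) 1) : 0 < u r := by
  have hanti : StrictAntiOn u (Icc 0 1) := by
    refine strictAntiOn_of_hasDerivWithinAt_neg (convex_Icc 0 1) h.continuousOn (f' := u') ?_ ?_
      <;> rw [interior_Icc]
    · exact fun x hx => (h.hasDerivAt hx).hasDerivWithinAt
    · exact hd
  simpa [h.apply_one] using hanti (Ico_subset_Icc_self hr) (right_mem_Icc.2 zero_le_one) hr.2

theorem exists_hasDerivAt_picone_ge (h₁ : IsBVPSolution N b₁ u₁ u₁')
    (h₂ : IsBVPSolution N b₂ u₂ u₂') {x : ℝ} (hx : x ∈ Ioo (0 : ℝ) 1) (hu₁ : 0 ≤ u₁ x)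
    (hu₁' : u₁' x ≤ 0) (hu₂ : 0 < u₂ x) (hu₂' : u₂' x ≤ 0) :
    ∃ d, HasDerivAt (picone N u₁ u₁' u₂ u₂') d x ∧ (b₂ x - b₁ x) * u₁ x ^ (N + 1) ≤ d := by
  refine ⟨_, hasDerivAt_picone (h₁.hasDerivAt hx) (h₂.hasDerivAt hx) (h₁.hasDerivAt_flux x hx)
    (h₂.hasDerivAt_flux x hx) hu₂.ne', ?_⟩
  have hy : 0 ≤ u₁ x * -u₂' x / u₂ x := by
    have := neg_nonneg.2 hu₂'
    positivity
  linarith [add_one_mul_mul_pow_le N (neg_nonneg.2 hu₁') hy]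

theorem monotoneOn_picone (h₁ : IsBVPSolution N b₁ u₁ u₁') (h₂ : IsBVPSolution N b₂ u₂ u₂')
    (hb : ∀ r ∈ Ioo (0 : ℝ) 1, b₁ r ≤ b₂ r) (hu₁ : ∀ r ∈ Ioo (0 : ℝ) 1, 0 < u₁ r)
    (hu₁' : ∀ r ∈ Ioo (0 : ℝ) 1, u₁' r ≤ 0) (hu₂ : ∀ r ∈ Ico (0 : ℝ) 1, 0 < u₂ r)
    (hu₂' : ∀ r ∈ Ioo (0 : ℝ) 1, u₂' r ≤ 0) :
    MonotoneOn (picone N u₁ u₁' u₂ u₂') (Ico 0 1) := by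
  have hP' (x : ℝ) (hx : x ∈ Ioo (0 : ℝ) 1) := h₁.exists_hasDerivAt_picone_ge h₂ hx (hu₁ x hx).le
    (hu₁' x hx) (hu₂ x (Ioo_subset_Ico_self hx)) (hu₂' x hx)
  have hsub : Ico (0 : ℝ) 1 ⊆ Icc 0 1 := Ico_subset_Icc_self
  refine monotoneOn_of_deriv_nonneg (convex_Ico 0 1) ?_ ?_ ?_
  · exact (((h₁.continuousOn.mono hsub).pow _).mul
      ((h₂.continuousOn_deriv.mono hsub).neg.pow N)).div ((h₂.continuousOn.mono hsub).pow N)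
      (fun r hr => pow_ne_zero _ (hu₂ r hr).ne') |>.sub
      ((h₁.continuousOn.mono hsub).mul ((h₁.continuousOn_deriv.mono hsub).neg.pow N))
  · rw [interior_Ico]
    intro x hx
    obtain ⟨d, hd, -⟩ := hP' x hx
    exact hd.differentiableAt.differentiableWithinAt
  · rw [interior_Ico]
    intro x hx
    obtain ⟨d, hd, hdge⟩ := hP' x hx
    rw [hd.deriv]
    exact (mul_nonneg (sub_nonneg.2 (hb x hx)) (pow_nonneg (hu₁ x hx).le _)).trans hdge

theorem tendsto_mul_div_pow_mul_flux (h₁ : IsBVPSolution N b₁ u₁ u₁')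
    (h₂ : IsBVPSolution N b₂ u₂ u₂') (hu₂' : u₂' 1 ≠ 0) :
    Tendsto (fun r => u₁ r * (u₁ r / u₂ r) ^ N * (-u₂' r) ^ N) (𝓝[<] 1) (𝓝 0) := by
  have hone : (1 : ℝ) ∈ Icc 0 1 := right_mem_Icc.2 zero_le_one
  rw [← nhdsWithin_Ico_eq_nhdsLT zero_lt_one]
  have hu₁ : Tendsto u₁ (𝓝[Ico 0 1] 1) (𝓝 0) := by
    simpa only [ContinuousWithinAt, h₁.apply_one] using
      (h₁.continuousOn 1 hone).mono Ico_subset_Icc_self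
  have hratio : Tendsto (fun r => u₁ r / u₂ r) (𝓝[Ico 0 1] 1) (𝓝 (u₁' 1 / u₂' 1)) :=
    ((h₁.hasDerivWithinAt 1 hone).mono Ico_subset_Icc_self).tendsto_div_of_eq_zero
      ((h₂.hasDerivWithinAt 1 hone).mono Ico_subset_Icc_self) h₁.apply_one h₂.apply_one hu₂'
      right_notMem_Ico
  have hflux : Tendsto (fun r => (-u₂' r) ^ N) (𝓝[Ico 0 1] 1) (𝓝 ((-u₂' 1) ^ N)) :=
    (((h₂.continuousOn_deriv 1 hone).mono Ico_subset_Icc_self).neg.pow N).tendsto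
  simpa using (hu₁.mul (hratio.pow N)).mul hflux

theorem not_forall_pos_of_comparison (h₁ : IsBVPSolution N b₁ u₁ u₁')
    (h₂ : IsBVPSolution N b₂ u₂ u₂') (hN : N ≠ 0)
    (hb : ∀ r ∈ Ioo (0 : ℝ) 1, 0 < b₁ r ∧ b₁ r ≤ b₂ r) {s : ℝ} (hs : s ∈ Ioo (0 : ℝ) 1)
    (hbs : b₁ s < b₂ s) (hu₁ : ∀ r ∈ Ioo (0 : ℝ) 1, 0 < u₁ r) :
    ¬ ∀ r ∈ Ioo (0 : ℝ) 1, 0 < u₂ r := by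
  intro hu₂
  set P := picone N u₁ u₁' u₂ u₂'
  have hd₁ (r : ℝ) (hr : r ∈ Ioo (0 : ℝ) 1) : u₁' r < 0 :=
    h₁.deriv_lt_zero hN (fun r hr => (hb r hr).1) hu₁ r (Ioo_subset_Ioc_self hr)
  have hd₂ := h₂.deriv_lt_zero hN (fun r hr => (hb r hr).1.trans_le (hb r hr).2) hu₂
  have hu₂₀ : ∀ r ∈ Ico (0 : ℝ) 1, 0 < u₂ r := fun r =>
    h₂.pos_of_deriv_lt_zero fun x hx => hd₂ x (Ioo_subset_Ioc_self hx)
  have hPmono : MonotoneOn P (Ico 0 1) :=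
    h₁.monotoneOn_picone h₂ (fun r hr => (hb r hr).2) hu₁ (fun r hr => (hd₁ r hr).le) hu₂₀
      (fun r hr => (hd₂ r (Ioo_subset_Ioc_self hr)).le)
  have hP₀ : P 0 = 0 := by simp [P, picone, h₁.deriv_zero, h₂.deriv_zero, hN]
  have hPle : ∀ r ∈ Ico (0 : ℝ) 1, P r ≤ 0 := by
    refine fun r => hPmono.le_of_tendsto_nhdsLT ?_
      (h₁.tendsto_mul_div_pow_mul_flux h₂ (hd₂ 1 (right_mem_Ioc.2 zero_lt_one)).ne)
    filter_upwards [Ioo_mem_nhdsLT zero_lt_one] with r hr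
    exact picone_le (hu₁ r hr).le (hd₁ r hr).le
  have hPs : P =ᶠ[𝓝 s] fun _ => 0 := by
    filter_upwards [Ioo_mem_nhds hs.1 hs.2] with r hr
    exact le_antisymm (hPle r ⟨hr.1.le, hr.2⟩)
      (hP₀ ▸ hPmono ⟨le_rfl, zero_lt_one⟩ ⟨hr.1.le, hr.2⟩ hr.1.le)
  obtain ⟨d, hd, hdge⟩ := h₁.exists_hasDerivAt_picone_ge h₂ hs (hu₁ s hs).le
    (hd₁ s hs).le (hu₂ s hs) (hd₂ s (Ioo_subset_Ioc_self hs)).le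
  have hd₀ : d = 0 := hd.unique ((hasDerivAt_const s 0).congr_of_eventuallyEq hPs)
  have := mul_pos (sub_pos.2 hbs) (pow_pos (hu₁ s hs) (N + 1))
  linarith

end IsBVPSolution

theorem stmt10_general (N : ℕ) (hN : 1 ≤ N) (b1 b2 : ℝ → ℝ)
    (hb : ∀ r ∈ Ioo (0:ℝ) 1, 0 < b1 r ∧ b1 r ≤ b2 r)
    (hstrict : 0 < volume {r : ℝ | r ∈ Ioo (0:ℝ) 1 ∧ b1 r < b2 r})
    (u1 u1' u2 u2' : ℝ → ℝ)
    (hu1'c : ContinuousOn u1' (Icc 0 1))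
    (hu1d : ∀ r ∈ Icc (0:ℝ) 1, HasDerivWithinAt u1 (u1' r) (Icc 0 1) r)
    (hu1eq : ∀ r ∈ Ioo (0:ℝ) 1,
      HasDerivAt (fun t => (-u1' t) ^ N) (b1 r * (u1 r) ^ N) r)
    (hu1b0 : u1' 0 = 0) (hu1b1 : u1 1 = 0)
    (hu2'c : ContinuousOn u2' (Icc 0 1))
    (hu2d : ∀ r ∈ Icc (0:ℝ) 1, HasDerivWithinAt u2 (u2' r) (Icc 0 1) r)
    (hu2eq : ∀ r ∈ Ioo (0:ℝ) 1,
      HasDerivAt (fun t => (-u2' t) ^ N) (b2 r * (u2 r) ^ N) r)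
    (hu2b0 : u2' 0 = 0) (hu2b1 : u2 1 = 0)
    (hu1ne : ∀ r ∈ Ioo (0:ℝ) 1, u1 r ≠ 0) :
    ∃ τ ∈ Ioo (0:ℝ) 1, u2 τ = 0 := by
  by_contra! hu2ne
  obtain ⟨s, hs, hbs⟩ := nonempty_of_measure_ne_zero hstrict.ne'
  obtain ⟨v₁, v₁', h₁, hv₁⟩ :=
    IsBVPSolution.exists_pos_of_ne_zero ⟨hu1'c, hu1d, hu1eq, hu1b0, hu1b1⟩ hu1ne
  obtain ⟨v₂, v₂', h₂, hv₂⟩ :=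
    IsBVPSolution.exists_pos_of_ne_zero ⟨hu2'c, hu2d, hu2eq, hu2b0, hu2b1⟩ hu2ne
  exact h₁.not_forall_pos_of_comparison h₂ (Nat.one_le_iff_ne_zero.1 hN) hb hs hbs hv₁ hv₂

theorem stmt10 (N : ℕ) (hN : 1 ≤ N) (b1 b2 : ℝ → ℝ)
    (hb1c : ContinuousOn b1 (Icc 0 1)) (hb2c : ContinuousOn b2 (Icc 0 1))
    (hb : ∀ r ∈ Ioo (0:ℝ) 1, 0 < b1 r ∧ b1 r ≤ b2 r)
    (hstrict : 0 < volume {r : ℝ | r ∈ Ioo (0:ℝ) 1 ∧ b1 r < b2 r})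
    (u1 u1' u2 u2' : ℝ → ℝ)
    (hu1'c : ContinuousOn u1' (Icc 0 1))
    (hu1d : ∀ r ∈ Icc (0:ℝ) 1, HasDerivWithinAt u1 (u1' r) (Icc 0 1) r)
    (hu1eq : ∀ r ∈ Ioo (0:ℝ) 1,
      HasDerivAt (fun t => (-u1' t) ^ N) (b1 r * (u1 r) ^ N) r)
    (hu1b0 : u1' 0 = 0) (hu1b1 : u1 1 = 0)
    (hu2'c : ContinuousOn u2' (Icc 0 1))
    (hu2d : ∀ r ∈ Icc (0:ℝ) 1, HasDerivWithinAt u2 (u2' r) (Icc 0 1) r)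
    (hu2eq : ∀ r ∈ Ioo (0:ℝ) 1,
      HasDerivAt (fun t => (-u2' t) ^ N) (b2 r * (u2 r) ^ N) r)
    (hu2b0 : u2' 0 = 0) (hu2b1 : u2 1 = 0)
    (hu1ne : ∀ r ∈ Ioo (0:ℝ) 1, u1 r ≠ 0) :
    ∃ τ ∈ Ioo (0:ℝ) 1, u2 τ = 0 :=
  stmt10_general N hN b1 b2 hb hstrict u1 u1' u2 u2' hu1'c hu1d hu1eq hu1b0 hu1b1 hu2'c hu2d hu2eq
    hu2b0 hu2b1 hu1ne
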